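/- Fix real numbers m ≠ 0 and ℏ > 0, a vector v ∈ ℝ³, vectors w ∈ ℝ³, a real number t₀, a constant c ∈ ℂ, and a smooth potential U : ℝ³ × ℝ → ℂ. For a smooth function ψ : ℝ³ × ℝ → ℂ define the transformed function ψ'(y,t) = exp((i·m/ℏ)(⟨y,v⟩ − (t/2)‖v‖²) + c) · ψ(y − t·v − w, t − t₀), and set U'(y,t) = U(y − t·v − w, t − t₀). Then for all (y,t) ∈ ℝ³ × ℝ one has (S^{U'}_m ψ')(y,t) = exp((i·m/ℏ)(⟨y,v⟩ − (t/2)‖v‖²) + c) · (S^{U}_m ψ)(y − t·v − w, t − t₀). In other words, the gauge transformation associated with the change of inertial frame with relative velocity v, spatial shift w and time shift t₀ intertwines the Schrödinger operators with potentials U and U'. -/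

import Mathlib

open scoped BigOperators

/-- Partial derivative of `ψ : ℝ³ × ℝ → ℂ` in the spatial direction `y_k`. -/
noncomputable def pdy (ψ : (Fin 3 → ℝ) × ℝ → ℂ) (k : Fin 3) (p : (Fin 3 → ℝ) × ℝ) : ℂ :=
  deriv (fun s : ℝ => ψ (Function.update p.1 k s, p.2)) (p.1 k)

/-- Partial derivative of `ψ : ℝ³ × ℝ → ℂ` in the time direction `t`. -/
noncomputable def pdt (ψ : (Fin 3 → ℝ) × ℝ → ℂ) (p : (Fin 3 → ℝ) × ℝ) : ℂ :=
  deriv (fun s : ℝ => ψ (p.1, s)) p.2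

/-- The Schrödinger operator with mass `m`, Planck constant `hbar` and potential `U`:
`S^U_m ψ = (ℏ²/(2m)) Σ_k ∂²ψ/∂y_k² + iℏ ∂ψ/∂t − U·ψ`. -/
noncomputable def schrodingerOp (m hbar : ℝ) (U : (Fin 3 → ℝ) × ℝ → ℂ)
    (ψ : (Fin 3 → ℝ) × ℝ → ℂ) (p : (Fin 3 → ℝ) × ℝ) : ℂ :=
  (hbar ^ 2 / (2 * m)) * ∑ k : Fin 3, pdy (pdy ψ k) k p
    + Complex.I * hbar * pdt ψ p - U p * ψ p

/-- The gauge phase `exp((i·m/ℏ)(⟨y,v⟩ − (t/2)‖v‖²) + c)`. -/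
noncomputable def gaugePhase (m hbar : ℝ) (v : Fin 3 → ℝ) (c : ℂ)
    (p : (Fin 3 → ℝ) × ℝ) : ℂ :=
  Complex.exp (Complex.I * m / hbar *
    (((∑ k : Fin 3, p.1 k * v k : ℝ) : ℂ)
      - ((p.2 / 2 : ℝ) : ℂ) * ((∑ k : Fin 3, v k * v k : ℝ) : ℂ)) + c)

abbrev E3 := (Fin 3 → ℝ) × ℝ

noncomputable def ee (k : Fin 3) : Fin 3 → ℝ := Pi.single k 1

lemma hasDerivAt_line (f : E3 → ℂ) (a u : E3) (s₀ : ℝ)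
    (hf : DifferentiableAt ℝ f (a + s₀ • u)) :
    HasDerivAt (fun s : ℝ => f (a + s • u)) (fderiv ℝ f (a + s₀ • u) u) s₀ := by
  have hg : HasDerivAt (fun s : ℝ => a + s • u) u s₀ := by
    simpa using ((hasDerivAt_id s₀).smul_const u).const_add a
  exact hf.hasFDerivAt.comp_hasDerivAt s₀ hg

lemma update_line (y : Fin 3 → ℝ) (k : Fin 3) (s : ℝ) :
    Function.update y k s = y - y k • ee k + s • ee k := by
  funext j
  by_cases h : j = k
  · subst h; simp [ee]
  · simp [Function.update_of_ne h, ee, Pi.single_apply, h]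

lemma pdy_eq_fderiv (f : E3 → ℂ) (k : Fin 3) (p : E3) (hf : DifferentiableAt ℝ f p) :
    pdy f k p = fderiv ℝ f p (ee k, 0) := by
  have key : (fun s : ℝ => f (Function.update p.1 k s, p.2))
      = fun s : ℝ => f ((p.1 - p.1 k • ee k, p.2) + s • (ee k, (0:ℝ))) := by
    funext s
    congr 1
    simp [Prod.ext_iff, update_line]
  have hpt : ((p.1 - p.1 k • ee k, p.2) + (p.1 k) • (ee k, (0:ℝ))) = p := by
    simp [Prod.ext_iff]
  have := hasDerivAt_line f (p.1 - p.1 k • ee k, p.2) (ee k, (0:ℝ)) (p.1 k)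
    (by rw [hpt]; exact hf)
  rw [hpt] at this
  rw [pdy, key]
  exact this.deriv

lemma pdt_eq_fderiv (f : E3 → ℂ) (p : E3) (hf : DifferentiableAt ℝ f p) :
    pdt f p = fderiv ℝ f p (0, 1) := by
  have key : (fun s : ℝ => f (p.1, s))
      = fun s : ℝ => f ((p.1, (0:ℝ)) + s • ((0 : Fin 3 → ℝ), (1:ℝ))) := by
    funext s; congr 1; simp [Prod.ext_iff]
  have hpt : ((p.1, (0:ℝ)) + p.2 • ((0 : Fin 3 → ℝ), (1:ℝ))) = p := by
    simp [Prod.ext_iff]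
  have := hasDerivAt_line f (p.1, (0:ℝ)) ((0 : Fin 3 → ℝ), (1:ℝ)) p.2
    (by rw [hpt]; exact hf)
  rw [hpt] at this
  rw [pdt, key]
  exact this.deriv

lemma contDiff_pdy (f : E3 → ℂ) (hf : ContDiff ℝ (⊤ : ℕ∞) f) (k : Fin 3) :
    ContDiff ℝ (⊤ : ℕ∞) (pdy f k) := by
  have heq : pdy f k = fun p => fderiv ℝ f p (ee k, 0) :=
    funext fun p => pdy_eq_fderiv f k p (hf.differentiable (by simp) p)
  rw [heq]
  exact (hf.fderiv_right (by simp)).clm_apply contDiff_const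

lemma sum_update_mul (v y : Fin 3 → ℝ) (k : Fin 3) (s : ℝ) :
    ∑ j : Fin 3, Function.update y k s j * v j = (∑ j : Fin 3, y j * v j) + (s - y k) * v k := by
  have h : ∀ j : Fin 3, Function.update y k s j * v j
      = y j * v j + (if j = k then (s - y k) * v k else 0) := by
    intro j
    by_cases h : j = k
    · subst h; simp [Function.update_self]; ring
    · simp [Function.update_of_ne h, h]
  rw [Finset.sum_congr rfl fun j _ => h j, Finset.sum_add_distrib,
    Finset.sum_ite_eq' Finset.univ k]
  simp

lemma gauge_slice_y (m hbar : ℝ) (v : Fin 3 → ℝ) (c : ℂ) (p : E3) (k : Fin 3) :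
    HasDerivAt (fun s : ℝ => gaugePhase m hbar v c (Function.update p.1 k s, p.2))
      ((Complex.I * m * v k / hbar) * gaugePhase m hbar v c p) (p.1 k) := by
  set C : ℂ := Complex.I * m * v k / hbar with hC
  set γ : ℂ := Complex.I * m / hbar *
      ((((∑ j : Fin 3, p.1 j * v j) - p.1 k * v k : ℝ) : ℂ)
        - ((p.2 / 2 : ℝ) : ℂ) * ((∑ j : Fin 3, v j * v j : ℝ) : ℂ)) + c with hγ
  have hfun : (fun s : ℝ => gaugePhase m hbar v c (Function.update p.1 k s, p.2))
      = fun s : ℝ => Complex.exp (C * s + γ) := by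
    funext s
    unfold gaugePhase
    congr 1
    rw [hC, hγ]
    rw [show (∑ j : Fin 3, Function.update p.1 k s j * v j) = (∑ j : Fin 3, p.1 j * v j) + (s - p.1 k) * v k from sum_update_mul v p.1 k s]
    push_cast
    ring
  rw [hfun]
  have h1 : HasDerivAt (fun s : ℝ => C * (s : ℂ) + γ) C (p.1 k) := by
    simpa using (Complex.ofRealCLM.hasDerivAt.const_mul C).add_const γ
  have h2 := h1.cexp
  have h3 : Complex.exp (C * (p.1 k : ℂ) + γ) = gaugePhase m hbar v c p := by
    have := congrFun hfun (p.1 k)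
    rw [Function.update_eq_self] at this
    exact this.symm
  rw [h3, mul_comm] at h2
  exact h2

lemma gauge_slice_t (m hbar : ℝ) (v : Fin 3 → ℝ) (c : ℂ) (p : E3) :
    HasDerivAt (fun s : ℝ => gaugePhase m hbar v c (p.1, s))
      ((-(Complex.I * m * ((∑ j : Fin 3, v j * v j : ℝ) : ℂ)) / (2 * hbar))
        * gaugePhase m hbar v c p) p.2 := by
  set C : ℂ := -(Complex.I * m * ((∑ j : Fin 3, v j * v j : ℝ) : ℂ)) / (2 * hbar) with hC
  set γ : ℂ := Complex.I * m / hbar * (((∑ j : Fin 3, p.1 j * v j : ℝ) : ℂ)) + c with hγ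
  have hfun : (fun s : ℝ => gaugePhase m hbar v c (p.1, s))
      = fun s : ℝ => Complex.exp (C * s + γ) := by
    funext s
    unfold gaugePhase
    congr 1
    rw [hC, hγ]
    push_cast
    ring
  rw [hfun]
  have h1 : HasDerivAt (fun s : ℝ => C * (s : ℂ) + γ) C p.2 := by
    simpa using (Complex.ofRealCLM.hasDerivAt.const_mul C).add_const γ
  have h2 := h1.cexp
  have h3 : Complex.exp (C * (p.2 : ℂ) + γ) = gaugePhase m hbar v c p := by
    have := congrFun hfun p.2
    exact this.symm
  rw [h3, mul_comm] at h2
  exact h2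

lemma Ly (m hbar : ℝ) (v w : Fin 3 → ℝ) (t0 : ℝ) (c : ℂ)
    (h : E3 → ℂ) (hsm : ContDiff ℝ (⊤ : ℕ∞) h) (k : Fin 3) (p : E3) :
    pdy (fun q => gaugePhase m hbar v c q * h (q.1 - q.2 • v - w, q.2 - t0)) k p
      = gaugePhase m hbar v c p *
          ((Complex.I * m * v k / hbar) * h (p.1 - p.2 • v - w, p.2 - t0)
            + pdy h k (p.1 - p.2 • v - w, p.2 - t0)) := by
  set Tp : E3 := (p.1 - p.2 • v - w, p.2 - t0) with hTpdef
  have hd : DifferentiableAt ℝ h Tp := hsm.differentiable (by simp) Tp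
  -- slice of the translated factor
  have hline : (fun s : ℝ => h (Function.update p.1 k s - p.2 • v - w, p.2 - t0))
      = fun s : ℝ => h ((p.1 - p.1 k • ee k - p.2 • v - w, p.2 - t0) + s • (ee k, (0:ℝ))) := by
    funext s
    congr 1
    simp only [Prod.mk_add_mk, Prod.smul_mk, Prod.mk.injEq, update_line]
    constructor
    · module
    · simp
  have hpt : ((p.1 - p.1 k • ee k - p.2 • v - w, p.2 - t0) + (p.1 k) • ((ee k : Fin 3 → ℝ), (0:ℝ))) = Tp := by
    simp only [Prod.mk_add_mk, Prod.smul_mk, Prod.mk.injEq, hTpdef]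
    constructor
    · module
    · simp
  have hb : HasDerivAt (fun s : ℝ => h (Function.update p.1 k s - p.2 • v - w, p.2 - t0))
      (pdy h k Tp) (p.1 k) := by
    rw [hline]
    have := hasDerivAt_line h _ _ (p.1 k) (by rw [hpt]; exact hd)
    rw [hpt] at this
    rwa [← pdy_eq_fderiv h k Tp hd] at this
  have ha := gauge_slice_y m hbar v c p k
  have hprod := ha.mul hb
  have hval := hprod.deriv
  rw [Function.update_eq_self] at hval
  show deriv (fun s : ℝ => gaugePhase m hbar v c (Function.update p.1 k s, p.2)
      * h (Function.update p.1 k s - p.2 • v - w, p.2 - t0)) (p.1 k) = _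
  refine hval.trans ?_
  ring

lemma fderiv_dir_t (h : E3 → ℂ) (hsm : ContDiff ℝ (⊤ : ℕ∞) h) (v : Fin 3 → ℝ) (q : E3) :
    fderiv ℝ h q (-v, (1:ℝ))
      = pdt h q - ∑ k : Fin 3, (v k : ℂ) * pdy h k q := by
  have hd : DifferentiableAt ℝ h q := hsm.differentiable (by simp) q
  have hsplit : ((-v, (1:ℝ)) : E3)
      = ((0 : Fin 3 → ℝ), (1:ℝ)) + ∑ k : Fin 3, (-(v k)) • ((ee k, (0:ℝ)) : E3) := by
    have h1 : (∑ k : Fin 3, (-(v k)) • ((ee k, (0:ℝ)) : E3))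
        = ((∑ k : Fin 3, (-(v k)) • ee k, (0:ℝ)) : E3) := by
      rw [Prod.ext_iff]
      constructor
      · rw [Prod.fst_sum]; simp
      · rw [Prod.snd_sum]; simp
    rw [h1]
    have h2 : (∑ k : Fin 3, (-(v k)) • ee k) = -v := by
      funext j
      simp [ee, Finset.sum_apply, Pi.single_apply]
    rw [h2]
    simp
  rw [hsplit, map_add, map_sum, pdt_eq_fderiv h q hd]
  congr 1
  have hterm : ∀ k : Fin 3, (fderiv ℝ h q) ((-(v k)) • ((ee k, (0:ℝ)) : E3))
      = -((v k : ℂ) * pdy h k q) := by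
    intro k
    rw [map_smul, ← pdy_eq_fderiv h k q hd]
    simp [Complex.real_smul]
  rw [Finset.sum_congr rfl fun k _ => hterm k]
  simp [sub_eq_add_neg]

lemma Lt (m hbar : ℝ) (v w : Fin 3 → ℝ) (t0 : ℝ) (c : ℂ)
    (h : E3 → ℂ) (hsm : ContDiff ℝ (⊤ : ℕ∞) h) (p : E3) :
    pdt (fun q => gaugePhase m hbar v c q * h (q.1 - q.2 • v - w, q.2 - t0)) p
      = gaugePhase m hbar v c p *
          ((-(Complex.I * m * ((∑ j : Fin 3, v j * v j : ℝ) : ℂ)) / (2 * hbar))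
              * h (p.1 - p.2 • v - w, p.2 - t0)
            + (pdt h (p.1 - p.2 • v - w, p.2 - t0)
              - ∑ k : Fin 3, (v k : ℂ) * pdy h k (p.1 - p.2 • v - w, p.2 - t0))) := by
  set Tp : E3 := (p.1 - p.2 • v - w, p.2 - t0) with hTpdef
  have hd : DifferentiableAt ℝ h Tp := hsm.differentiable (by simp) Tp
  have hline : (fun s : ℝ => h (p.1 - s • v - w, s - t0))
      = fun s : ℝ => h ((p.1 - w, -t0) + s • ((-v : Fin 3 → ℝ), (1:ℝ))) := by
    funext s
    congr 1
    simp only [Prod.mk_add_mk, Prod.smul_mk, Prod.mk.injEq]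
    constructor
    · module
    · simp [smul_eq_mul]; ring
  have hpt : ((p.1 - w, -t0) + p.2 • ((-v : Fin 3 → ℝ), (1:ℝ))) = Tp := by
    simp only [Prod.mk_add_mk, Prod.smul_mk, Prod.mk.injEq, hTpdef]
    constructor
    · module
    · simp [smul_eq_mul]; ring
  have hb : HasDerivAt (fun s : ℝ => h (p.1 - s • v - w, s - t0))
      (pdt h Tp - ∑ k : Fin 3, (v k : ℂ) * pdy h k Tp) p.2 := by
    rw [hline]
    have := hasDerivAt_line h _ _ p.2 (by rw [hpt]; exact hd)
    rw [hpt] at this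
    rwa [fderiv_dir_t h hsm v Tp] at this
  have ha := gauge_slice_t m hbar v c p
  have hprod := ha.mul hb
  have hval := hprod.deriv
  show deriv (fun s : ℝ => gaugePhase m hbar v c (p.1, s)
      * h (p.1 - s • v - w, s - t0)) p.2 = _
  refine hval.trans ?_
  ring

lemma pdy_const_mul_add (a : ℂ) (f g : E3 → ℂ)
    (hf : ContDiff ℝ (⊤ : ℕ∞) f) (hg : ContDiff ℝ (⊤ : ℕ∞) g) (k : Fin 3) (q : E3) :
    pdy (fun x => a * f x + g x) k q = a * pdy f k q + pdy g k q := by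
  have hdf : DifferentiableAt ℝ f q := hf.differentiable (by simp) q
  have hdg : DifferentiableAt ℝ g q := hg.differentiable (by simp) q
  have hsum : DifferentiableAt ℝ (fun x => a * f x + g x) q := (hdf.const_mul a).add hdg
  rw [pdy_eq_fderiv _ k q hsum, pdy_eq_fderiv f k q hdf, pdy_eq_fderiv g k q hdg,
    fderiv_fun_add (hdf.const_mul a) hdg, fderiv_const_mul hdf a]
  simp

/-- The gauge transformation associated with the change of inertial frame with relative
velocity `v`, spatial shift `w` and time shift `t₀` intertwines the Schrödinger operators
with potentials `U` and `U'(y,t) = U(y − t·v − w, t − t₀)`. -/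
theorem schrodinger_gauge_covariance
    (m hbar : ℝ) (hm : m ≠ 0) (hh : 0 < hbar)
    (v w : Fin 3 → ℝ) (t0 : ℝ) (c : ℂ)
    (U : (Fin 3 → ℝ) × ℝ → ℂ) (hU : ContDiff ℝ (⊤ : ℕ∞) U)
    (ψ : (Fin 3 → ℝ) × ℝ → ℂ) (hψ : ContDiff ℝ (⊤ : ℕ∞) ψ) :
    ∀ p : (Fin 3 → ℝ) × ℝ,
      schrodingerOp m hbar (fun q => U (q.1 - q.2 • v - w, q.2 - t0))
        (fun q => gaugePhase m hbar v c q * ψ (q.1 - q.2 • v - w, q.2 - t0)) p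
      = gaugePhase m hbar v c p *
          schrodingerOp m hbar U ψ (p.1 - p.2 • v - w, p.2 - t0) := by
  intro p
  have hhb : (hbar : ℂ) ≠ 0 := Complex.ofReal_ne_zero.mpr hh.ne'
  have hmc : (m : ℂ) ≠ 0 := Complex.ofReal_ne_zero.mpr hm
  have hH : ∀ k : Fin 3,
      ContDiff ℝ (⊤ : ℕ∞) (fun q : E3 => (Complex.I * m * v k / hbar) * ψ q + pdy ψ k q) :=
    fun k => (contDiff_const.mul hψ).add (contDiff_pdy ψ hψ k)
  have h2 : ∀ k : Fin 3,
      pdy (pdy (fun q => gaugePhase m hbar v c q * ψ (q.1 - q.2 • v - w, q.2 - t0)) k) k p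
        = gaugePhase m hbar v c p *
            ((Complex.I * m * v k / hbar) *
                ((Complex.I * m * v k / hbar) * ψ (p.1 - p.2 • v - w, p.2 - t0)
                  + pdy ψ k (p.1 - p.2 • v - w, p.2 - t0))
              + ((Complex.I * m * v k / hbar) * pdy ψ k (p.1 - p.2 • v - w, p.2 - t0)
                  + pdy (pdy ψ k) k (p.1 - p.2 • v - w, p.2 - t0))) := by
    intro k
    have e1 : pdy (fun q => gaugePhase m hbar v c q * ψ (q.1 - q.2 • v - w, q.2 - t0)) k
        = fun q => gaugePhase m hbar v c q *
            ((fun x => (Complex.I * m * v k / hbar) * ψ x + pdy ψ k x)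
              (q.1 - q.2 • v - w, q.2 - t0)) :=
      funext fun p' => Ly m hbar v w t0 c ψ hψ k p'
    rw [e1, Ly m hbar v w t0 c _ (hH k) k p,
      pdy_const_mul_add (Complex.I * m * v k / hbar) ψ (pdy ψ k) hψ (contDiff_pdy ψ hψ k) k
        (p.1 - p.2 • v - w, p.2 - t0)]
  have h3 := Lt m hbar v w t0 c ψ hψ p
  unfold schrodingerOp
  simp only []
  -- abbreviations
  set g : ℂ := gaugePhase m hbar v c p with hg
  set Ψ : ℂ := ψ (p.1 - p.2 • v - w, p.2 - t0) with hΨ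
  set pt : ℂ := pdt ψ (p.1 - p.2 • v - w, p.2 - t0) with hpt
  have e2 : ∑ k : Fin 3, pdy (pdy (fun q => gaugePhase m hbar v c q
        * ψ (q.1 - q.2 • v - w, q.2 - t0)) k) k p
      = ((Complex.I * m / hbar) ^ 2 * (g * Ψ)) * (((∑ j : Fin 3, v j * v j : ℝ) : ℂ))
        + ((2 * (Complex.I * m / hbar)) * g) *
            (∑ k : Fin 3, (v k : ℂ) * pdy ψ k (p.1 - p.2 • v - w, p.2 - t0))
        + g * (∑ k : Fin 3, pdy (pdy ψ k) k (p.1 - p.2 • v - w, p.2 - t0)) := by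
    rw [Finset.sum_congr rfl fun k _ => h2 k]
    have cast1 : (((∑ j : Fin 3, v j * v j : ℝ)) : ℂ) = ∑ j : Fin 3, ((v j : ℂ) * (v j : ℂ)) := by
      push_cast; rfl
    rw [cast1]
    rw [Finset.sum_congr rfl fun k _ => show _ = ((Complex.I * m / hbar) ^ 2 * (g * Ψ)) * ((v k : ℂ) * (v k : ℂ))
        + ((2 * (Complex.I * m / hbar)) * g) * ((v k : ℂ) * pdy ψ k (p.1 - p.2 • v - w, p.2 - t0))
        + g * pdy (pdy ψ k) k (p.1 - p.2 • v - w, p.2 - t0) from by ring]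
    rw [Finset.sum_add_distrib, Finset.sum_add_distrib, ← Finset.mul_sum, ← Finset.mul_sum,
      ← Finset.mul_sum]
  set S : ℂ := ∑ k : Fin 3, (v k : ℂ) * pdy ψ k (p.1 - p.2 • v - w, p.2 - t0) with hS
  set D : ℂ := ∑ k : Fin 3, pdy (pdy ψ k) k (p.1 - p.2 • v - w, p.2 - t0) with hD
  set Vc : ℂ := (((∑ j : Fin 3, v j * v j : ℝ)) : ℂ) with hVc
  rw [e2, h3]
  set u : ℂ := U (p.1 - p.2 • v - w, p.2 - t0) with hu
  field_simp
  ring_nf
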